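/- arXiv:1908.11679 — 4 statements merged into one kernel-verified Lean document; each statement's English description precedes it below -/
import Mathlib

section
/- Let λ = [λ₁, …, λ_k] be a partition of n. Then λ* = [λ₂, …, λ_k] is the unique partition μ of n − λ₁ such that ᵗλ and ᵗμ are 2-transverse. -/
/-!
Deleting the first row of `λ` removes the top box of every column, so `ᵗλ*_i = ᵗλ_i - 1`:
the two conjugates are close and share no positive part. Conversely, closeness alone gives
`ᵗμ_i ≥ ᵗλ_i - 1 = ᵗλ*_i` for every `i`, while `|ᵗμ| = |μ| = |λ| - λ₁ = |ᵗλ*|`; so all these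
inequalities are equalities, `ᵗμ = ᵗλ*`, and `μ = λ*` by conjugating back.
-/

/-- A partition, encoded as a weakly decreasing function `ℕ → ℕ` (0-indexed parts)
that is eventually zero. -/
def IsPartition (f : ℕ → ℕ) : Prop := Antitone f ∧ ∃ N, ∀ i, N ≤ i → f i = 0

/-- The conjugate (transpose) partition: `conj f i = #{j : f j ≥ i+1}` (0-indexed,
so `conj f i` is the (i+1)-st column length, i.e. ᵗλ_{i+1}). -/
noncomputable def conj (f : ℕ → ℕ) (i : ℕ) : ℕ := Nat.card {j : ℕ // i + 1 ≤ f j}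

/-- Two partitions are close if corresponding parts differ by at most 1. -/
def Close (f g : ℕ → ℕ) : Prop := ∀ i, f i ≤ g i + 1 ∧ g i ≤ f i + 1

/-- Two partitions are 2-transverse: they are close and every positive common part
(at equal indices) occurs an even number of times. -/
def Transverse2 (f g : ℕ → ℕ) : Prop :=
  Close f g ∧ ∀ p, 0 < p → Even (Nat.card {i : ℕ // f i = p ∧ g i = p})

/-- The size |λ| of a partition: the (finite) sum of its parts. -/
noncomputable def psize (f : ℕ → ℕ) : ℕ := ∑ᶠ i, f i

/-- Prepend a part to a partition. -/
def pcons (a : ℕ) (f : ℕ → ℕ) : ℕ → ℕ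
  | 0 => a
  | (i+1) => f i

/-- `RemoveTwoHook ν μ` : the partition μ is obtained from ν by removing a 2-hook,
either two adjacent blocks in one row (type (1²)) or two adjacent blocks in one
column (type (2)), the result still being a Young diagram. -/
def RemoveTwoHook (ν μ : ℕ → ℕ) : Prop :=
  IsPartition ν ∧ IsPartition μ ∧
  ((∃ i, μ i + 2 = ν i ∧ ∀ j, j ≠ i → μ j = ν j) ∨
   (∃ i, μ i + 1 = ν i ∧ μ (i+1) + 1 = ν (i+1) ∧ ∀ j, j ≠ i → j ≠ i + 1 → μ j = ν j))

open Finset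

lemma eq_of_le_of_finsum_eq {ι : Type*} {g h : ι → ℕ} (hh : (Function.support h).Finite)
    (hle : g ≤ h) (hsum : ∑ᶠ i, g i = ∑ᶠ i, h i) : g = h := by
  have hsupp : Function.support g ⊆ hh.toFinset := by
    rw [Set.Finite.coe_toFinset]
    exact fun i hi h0 => hi (Nat.eq_zero_of_le_zero (h0 ▸ hle i))
  rw [finsum_eq_sum_of_support_subset g hsupp,
    finsum_eq_sum_of_support_subset h hh.coe_toFinset.ge] at hsum
  have hon := (sum_eq_sum_iff_of_le fun i _ => hle i).1 hsum
  funext i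
  by_cases hi : i ∈ hh.toFinset
  · exact hon i hi
  · have h0 : h i = 0 := by simpa using hi
    exact h0 ▸ Nat.eq_zero_of_le_zero (h0 ▸ hle i)

lemma psize_eq_sum_range {f : ℕ → ℕ} {N : ℕ} (hN : ∀ j, N ≤ j → f j = 0) :
    psize f = ∑ i ∈ range N, f i :=
  finsum_eq_sum_of_support_subset f fun j hj => by
    by_contra h
    exact hj (hN j (by simpa using h))

lemma conj_eq_of_forall_iff {f : ℕ → ℕ} {i n : ℕ} (h : ∀ j, i + 1 ≤ f j ↔ j < n) :
    conj f i = n :=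
  (Nat.card_congr (Equiv.subtypeEquivRight h)).trans
    ((Nat.card_coe_set_eq (Set.Iio n)).trans (Set.ncard_Iio_nat n))

lemma conj_eq_card_filter {f : ℕ → ℕ} {N : ℕ} (hN : ∀ j, N ≤ j → f j = 0) (i : ℕ) :
    conj f i = #{j ∈ range N | i + 1 ≤ f j} := by
  rw [← Nat.card_eq_finsetCard]
  refine Nat.card_congr (Equiv.subtypeEquivRight fun j => ?_)
  simp only [mem_filter, mem_range, iff_and_self]
  intro h
  by_contra hj
  have := hN j (not_lt.1 hj)
  omega

namespace IsPartition

variable {f : ℕ → ℕ}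

lemma tail (hf : IsPartition f) : IsPartition (fun i => f (i + 1)) :=
  ⟨fun _ _ h => hf.1 (Nat.succ_le_succ h),
    hf.2.imp fun N hN i hi => hN (i + 1) (by omega)⟩

lemma le_iff_lt_conj (hf : IsPartition f) (i j : ℕ) : i + 1 ≤ f j ↔ j < conj f i := by
  obtain ⟨hanti, N, hN⟩ := hf
  have hlower : IsLowerSet {j | i + 1 ≤ f j} := fun _ _ hba ha => le_trans ha (hanti hba)
  have hfin : {j | i + 1 ≤ f j}.Finite := (Set.finite_Iio N).subset fun j hj => by
    by_contra h
    have := hN j (not_lt.1 h)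
    simp_all
  obtain h | ⟨a, ha⟩ := hlower.eq_univ_or_Iio
  · exact absurd (h ▸ hfin) Set.infinite_univ
  · have hiff : ∀ j, i + 1 ≤ f j ↔ j < a := Set.ext_iff.1 ha
    rw [conj_eq_of_forall_iff hiff, hiff]

lemma conj_eq_zero (hf : IsPartition f) {i : ℕ} (h : f 0 ≤ i) : conj f i = 0 := by
  by_contra hne
  have := (hf.le_iff_lt_conj i 0).2 (Nat.pos_of_ne_zero hne)
  omega

lemma conj_conj (hf : IsPartition f) : conj (conj f) = f :=
  funext fun j => conj_eq_of_forall_iff fun i => by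
    rw [Nat.add_one_le_iff, ← hf.le_iff_lt_conj]
    omega

lemma conj_tail (hf : IsPartition f) (i : ℕ) :
    conj (fun k => f (k + 1)) i = conj f i - 1 :=
  conj_eq_of_forall_iff fun j => by rw [hf.le_iff_lt_conj]; omega

lemma psize_tail_add (hf : IsPartition f) : psize (fun i => f (i + 1)) + f 0 = psize f := by
  obtain ⟨N, hN⟩ := hf.2
  rw [psize_eq_sum_range (N := N) fun j hj => hN (j + 1) (by omega),
    psize_eq_sum_range (N := N + 1) fun j hj => hN j (by omega), sum_range_succ']

lemma psize_conj (hf : IsPartition f) : psize (conj f) = psize f := by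
  obtain ⟨N, hN⟩ := hf.2
  rw [psize_eq_sum_range (N := f 0) fun _ => hf.conj_eq_zero, psize_eq_sum_range hN]
  simp only [conj_eq_card_filter hN, card_filter]
  rw [sum_comm]
  refine sum_congr rfl fun j _ => ?_
  have hrow : {i ∈ range (f 0) | i + 1 ≤ f j} = range (f j) := by
    have := hf.1 (Nat.zero_le j)
    ext i
    simp only [mem_filter, mem_range]
    omega
  rw [← card_filter, hrow, card_range]

end IsPartition

/-- λ* is the unique partition μ of n − λ₁ such that ᵗλ and ᵗμ are 2-transverse. -/
theorem stmt2 (f : ℕ → ℕ) (hf : IsPartition f) :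
    Transverse2 (conj f) (conj (fun i => f (i + 1))) ∧
    ∀ μ : ℕ → ℕ, IsPartition μ → psize μ + f 0 = psize f →
      Transverse2 (conj f) (conj μ) → μ = fun i => f (i + 1) := by
  have htail := hf.conj_tail
  refine ⟨⟨fun i => by rw [htail]; omega, fun p hp => ?_⟩, fun μ hμ hsize htr => ?_⟩
  · have : IsEmpty {i // conj f i = p ∧ conj (fun k => f (k + 1)) i = p} :=
      ⟨fun ⟨i, h1, h2⟩ => by rw [htail, h1] at h2; omega⟩
    simp
  · have hle : conj (fun k => f (k + 1)) ≤ conj μ := fun i => by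
      show conj _ i ≤ conj μ i
      have := (htr.1 i).1
      rw [htail]
      omega
    have hsum : psize (conj (fun k => f (k + 1))) = psize (conj μ) := by
      have := hf.psize_tail_add
      rw [hf.tail.psize_conj, hμ.psize_conj]
      omega
    have hfin : (Function.support (conj μ)).Finite :=
      (Set.finite_Iio (μ 0)).subset fun i hi => not_le.1 fun h => hi (hμ.conj_eq_zero h)
    rw [← hμ.conj_conj, ← eq_of_le_of_finsum_eq hfin hle hsum, hf.tail.conj_conj]
end

section
/- Let λ be a partition of n with largest part λ₁ and let m ≥ λ₁. Let μ be a partition of n + m with μ₁ ≤ m + 2 such that ᵗλ and ᵗμ are 2-transverse. Then μ is obtained from the partition [m+2, λ₁, λ₂, …] (prepending a part m+2 to λ) by removing a 2-hook. -/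
lemma nat_eq_of_lt_iff {a b : ℕ} (h : ∀ k, k < a ↔ k < b) : a = b :=
  le_antisymm (le_of_forall_lt fun c hc => (h c).mp hc)
    (le_of_forall_lt fun c hc => (h c).mpr hc)

lemma conj_spec (f : ℕ → ℕ) (hf : IsPartition f) (i j : ℕ) :
    i < f j ↔ j < conj f i := by
  obtain ⟨hmono, N, hN⟩ := hf
  have hfin : {j : ℕ | i + 1 ≤ f j}.Finite := by
    apply (Set.finite_Iio N).subset
    intro x hx
    simp only [Set.mem_setOf_eq] at hx
    simp only [Set.mem_Iio]
    by_contra h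
    have := hN x (by omega)
    omega
  have hconj : conj f i = {j : ℕ | i + 1 ≤ f j}.ncard := Nat.card_coe_set_eq _
  constructor
  · intro h
    have hsub : Set.Iic j ⊆ {j : ℕ | i + 1 ≤ f j} := by
      intro x hx
      simp only [Set.mem_Iic] at hx
      have := hmono hx
      simp only [Set.mem_setOf_eq]
      omega
    have h1 : (Set.Iic j).ncard ≤ {j : ℕ | i + 1 ≤ f j}.ncard :=
      Set.ncard_le_ncard hsub hfin
    have h2 : (Set.Iic j).ncard = j + 1 := by
      rw [← Finset.coe_Iic, Set.ncard_coe_finset, Nat.card_Iic]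
    omega
  · intro h
    by_contra hc
    push_neg at hc
    have hsub : {j : ℕ | i + 1 ≤ f j} ⊆ Set.Iio j := by
      intro x hx
      simp only [Set.mem_setOf_eq] at hx
      simp only [Set.mem_Iio]
      by_contra h2
      have := hmono (le_of_not_gt h2)
      omega
    have h1 : {j : ℕ | i + 1 ≤ f j}.ncard ≤ (Set.Iio j).ncard :=
      Set.ncard_le_ncard hsub (Set.finite_Iio j)
    have h2 : (Set.Iio j).ncard = j := by
      rw [← Finset.coe_range, Set.ncard_coe_finset, Finset.card_range]
    omega

lemma conj_antitone (f : ℕ → ℕ) (hf : IsPartition f) : Antitone (conj f) := by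
  intro a b hab
  by_contra h
  push_neg at h
  have h1 : b < f (conj f a) := (conj_spec f hf b (conj f a)).mpr h
  have h2 : a < f (conj f a) := by omega
  have := (conj_spec f hf a (conj f a)).mp h2
  omega

lemma conj_eq_zero (f : ℕ → ℕ) (hf : IsPartition f) (i : ℕ) (h : f 0 ≤ i) :
    conj f i = 0 := by
  by_contra hc
  have : 0 < conj f i := Nat.pos_of_ne_zero hc
  have := (conj_spec f hf i 0).mpr this
  omega

lemma psize_eq_sum (f : ℕ → ℕ) (hf : IsPartition f) (M : ℕ) (hM : f 0 ≤ M) :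
    psize f = ∑ i ∈ Finset.range M, conj f i := by
  obtain ⟨N, hN⟩ := hf.2
  have hstep1 : psize f = ∑ j ∈ Finset.range N, f j := by
    apply finsum_eq_sum_of_support_subset
    intro x hx
    simp only [Function.mem_support] at hx
    simp only [Finset.coe_range, Set.mem_Iio]
    by_contra h
    exact hx (hN x (by omega))
  have hfj : ∀ j, f j ≤ M := fun j => (hf.1 (Nat.zero_le j)).trans hM
  have hcb : ∀ i, conj f i ≤ N := by
    intro i
    by_contra h
    push_neg at h
    have := (conj_spec f hf i N).mpr h
    have := hN N le_rfl
    omega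
  rw [hstep1]
  have hrow : ∀ j ∈ Finset.range N, f j = ∑ i ∈ Finset.range M, if i < f j then 1 else 0 := by
    intro j _
    rw [← Finset.card_filter]
    have : Finset.filter (fun i => i < f j) (Finset.range M) = Finset.range (f j) := by
      ext x
      simp only [Finset.mem_filter, Finset.mem_range]
      have := hfj j
      omega
    rw [this, Finset.card_range]
  rw [Finset.sum_congr rfl hrow, Finset.sum_comm]
  apply Finset.sum_congr rfl
  intro i _
  rw [← Finset.card_filter]
  have : Finset.filter (fun j => i < f j) (Finset.range N) = Finset.range (conj f i) := by
    ext x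
    simp only [Finset.mem_filter, Finset.mem_range]
    constructor
    · intro ⟨_, hx⟩
      exact (conj_spec f hf i x).mp hx
    · intro hx
      exact ⟨lt_of_lt_of_le hx (hcb i), (conj_spec f hf i x).mpr hx⟩
  rw [this, Finset.card_range]

/-- If m ≥ λ₁, |μ| = n + m, μ₁ ≤ m + 2 and ᵗλ, ᵗμ are 2-transverse, then μ is
obtained from [m+2, λ] by removing a 2-hook. -/
theorem stmt6 (f μ : ℕ → ℕ) (m : ℕ) (hf : IsPartition f) (hμ : IsPartition μ)
    (hm : f 0 ≤ m) (hsize : psize μ = psize f + m) (hμ1 : μ 0 ≤ m + 2)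
    (ht : Transverse2 (conj f) (conj μ)) :
    RemoveTwoHook (pcons (m + 2) f) μ := by
  obtain ⟨hcl, heven⟩ := ht
  have hν : IsPartition (pcons (m+2) f) := by
    constructor
    · apply antitone_nat_of_succ_le
      intro n
      cases n with
      | zero => show f 0 ≤ m + 2; omega
      | succ k => exact hf.1 (Nat.le_succ k)
    · obtain ⟨N, hN⟩ := hf.2
      refine ⟨N+1, fun i hi => ?_⟩
      cases i with
      | zero => omega
      | succ k => exact hN k (by omega)
  set ν := pcons (m+2) f with hνdef
  set A := conj f with hAdef
  set B := conj μ with hBdef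
  set C := conj ν with hCdef
  have specf : ∀ i j, i < f j ↔ j < A i := conj_spec f hf
  have specμ : ∀ i j, i < μ j ↔ j < B i := conj_spec μ hμ
  have specν : ∀ i j, i < ν j ↔ j < C i := conj_spec ν hν
  have hAanti : Antitone A := conj_antitone f hf
  have hBanti : Antitone B := conj_antitone μ hμ
  have hCanti : Antitone C := conj_antitone ν hν
  have hA0 : ∀ i, m ≤ i → A i = 0 := fun i hi => conj_eq_zero f hf i (hm.trans hi)
  have hB0 : ∀ i, m + 2 ≤ i → B i = 0 := fun i hi => conj_eq_zero μ hμ i (hμ1.trans hi)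
  have hν0 : ν 0 = m + 2 := rfl
  have hνs : ∀ k, ν (k+1) = f k := fun k => rfl
  have hC : ∀ i, C i = if i < m + 2 then A i + 1 else 0 := by
    intro i
    apply nat_eq_of_lt_iff
    intro j
    rw [← specν i j]
    cases j with
    | zero =>
      rw [hν0]
      by_cases h : i < m + 2 <;> simp [h] <;> omega
    | succ k =>
      rw [hνs k, specf i k]
      by_cases h : i < m + 2
      · simp [h]
      · have hAi : A i = 0 := hA0 i (by omega)
        simp [h, hAi]
  have hsA : psize f = ∑ i ∈ Finset.range (m+2), A i := psize_eq_sum f hf (m+2) (by omega)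
  have hsB : psize μ = ∑ i ∈ Finset.range (m+2), B i := psize_eq_sum μ hμ (m+2) hμ1
  have hsum : ∑ i ∈ Finset.range (m+2), B i = ∑ i ∈ Finset.range (m+2), A i + m := by
    rw [← hsA, ← hsB, hsize]
  set d : ℕ → ℕ := fun i => A i + 1 - B i with hddef
  have hd2 : ∑ i ∈ Finset.range (m+2), d i = 2 := by
    have h1 : ∀ i ∈ Finset.range (m+2), B i + d i = A i + 1 := fun i _ => by
      have := (hcl i).2; simp only [hddef]; omega
    have h2 := Finset.sum_congr rfl h1
    rw [Finset.sum_add_distrib, Finset.sum_add_distrib, Finset.sum_const,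
      Finset.card_range, smul_eq_mul, mul_one] at h2
    omega
  have hdle : ∀ i, d i ≤ 2 := fun i => by have := (hcl i).1; simp only [hddef]; omega
  obtain ⟨i2, hi2mem, hi2pos⟩ : ∃ i ∈ Finset.range (m+2), 0 < d i := by
    by_contra h
    push_neg at h
    have : ∑ i ∈ Finset.range (m+2), d i = 0 :=
      Finset.sum_eq_zero (fun i hi => by have := h i hi; omega)
    omega
  have herase := Finset.sum_erase_add (Finset.range (m+2)) d hi2mem
  rcases (by omega : d i2 = 2 ∨ d i2 = 1) with hcase | hcase
  · -- type (2) : one column loses two boxes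
    have hrest : ∀ j ∈ (Finset.range (m+2)).erase i2, d j = 0 := by
      rw [← Finset.sum_eq_zero_iff]
      omega
    have hdz : ∀ j, j < m + 2 → j ≠ i2 → d j = 0 := fun j hj hji =>
      hrest j (Finset.mem_erase.mpr ⟨hji, Finset.mem_range.mpr hj⟩)
    have hi2lt : i2 < m + 2 := Finset.mem_range.mp hi2mem
    have hBother : ∀ j, j ≠ i2 → B j = C j := by
      intro j hj
      rw [hC]
      by_cases hjm : j < m + 2
      · have h0 := hdz j hjm hj
        have := (hcl j).2
        simp only [hjm, if_true]
        simp only [hddef] at h0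
        omega
      · simp only [hjm, if_false]
        exact hB0 j (by omega)
    have hBi2 : B i2 + 2 = C i2 := by
      rw [hC]
      have := (hcl i2).1
      simp only [hddef] at hcase
      simp only [hi2lt, if_true]
      omega
    set c := C i2 with hcdef
    have hc2 : 2 ≤ c := by omega
    have hnext : C (i2 + 1) ≤ c - 2 := by
      by_cases h : i2 + 1 < m + 2
      · have h1 : B (i2+1) = C (i2+1) := hBother (i2+1) (by omega)
        have h2 : B (i2+1) ≤ B i2 := hBanti (by omega)
        omega
      · rw [hC]
        simp only [h, if_false]
        omega
    -- compute the four boundary values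
    have hν1 : ν (c - 2) = i2 + 1 := by
      apply le_antisymm
      · by_contra h
        push_neg at h
        have := (specν (i2+1) (c-2)).mp h
        omega
      · have : c - 2 < C i2 := by omega
        have := (specν i2 (c-2)).mpr this
        omega
    have hν2 : ν (c - 2 + 1) = i2 + 1 := by
      apply le_antisymm
      · by_contra h
        push_neg at h
        have := (specν (i2+1) (c-2+1)).mp h
        omega
      · have : c - 2 + 1 < C i2 := by omega
        have := (specν i2 (c-2+1)).mpr this
        omega
    have hμ1' : μ (c - 2) = i2 := by
      apply le_antisymm
      · by_contra h
        push_neg at h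
        have := (specμ i2 (c-2)).mp h
        omega
      · rcases Nat.eq_zero_or_pos i2 with h0 | h0
        · omega
        · have hle : C i2 ≤ C (i2 - 1) := hCanti (by omega)
          have hBC : B (i2-1) = C (i2-1) := hBother (i2-1) (by omega)
          have : c - 2 < B (i2 - 1) := by omega
          have := (specμ (i2-1) (c-2)).mpr this
          omega
    have hμ2' : μ (c - 2 + 1) = i2 := by
      apply le_antisymm
      · by_contra h
        push_neg at h
        have := (specμ i2 (c-2+1)).mp h
        omega
      · rcases Nat.eq_zero_or_pos i2 with h0 | h0
        · omega
        · have hle : C i2 ≤ C (i2 - 1) := hCanti (by omega)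
          have hBC : B (i2-1) = C (i2-1) := hBother (i2-1) (by omega)
          have : c - 2 + 1 < B (i2 - 1) := by omega
          have := (specμ (i2-1) (c-2+1)).mpr this
          omega
    refine ⟨hν, hμ, Or.inr ⟨c - 2, by omega, by omega, ?_⟩⟩
    intro j hj1 hj2
    apply nat_eq_of_lt_iff
    intro k
    rw [specμ k j, specν k j]
    by_cases hki : k = i2
    · subst hki
      omega
    · rw [hBother k hki]
  · -- type (1²) : one row loses two boxes
    have hi2lt : i2 < m + 2 := Finset.mem_range.mp hi2mem
    have hsum1 : ∑ x ∈ (Finset.range (m+2)).erase i2, d x = 1 := by omega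
    obtain ⟨i1', hi1'mem, hi1'pos⟩ : ∃ j ∈ (Finset.range (m+2)).erase i2, 0 < d j := by
      by_contra h
      push_neg at h
      have : ∑ x ∈ (Finset.range (m+2)).erase i2, d x = 0 :=
        Finset.sum_eq_zero (fun i hi => by have := h i hi; omega)
      omega
    have hi1'le : d i1' ≤ 1 := by
      have := Finset.single_le_sum (f := d) (fun i _ => Nat.zero_le _) hi1'mem
      omega
    have hi1'one : d i1' = 1 := by omega
    have herase2 := Finset.sum_erase_add ((Finset.range (m+2)).erase i2) d hi1'mem
    have hrest : ∀ j ∈ ((Finset.range (m+2)).erase i2).erase i1', d j = 0 := by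
      rw [← Finset.sum_eq_zero_iff]
      omega
    have hne12 : i2 ≠ i1' := (Finset.mem_erase.mp hi1'mem).1.symm
    have hi1'lt : i1' < m + 2 := Finset.mem_range.mp (Finset.mem_erase.mp hi1'mem).2
    have hdz0 : ∀ j, j < m + 2 → j ≠ i2 → j ≠ i1' → d j = 0 := fun j hj h2 h1 =>
      hrest j (Finset.mem_erase.mpr ⟨h1, Finset.mem_erase.mpr ⟨h2, Finset.mem_range.mpr hj⟩⟩)
    obtain ⟨i0, i1, hlt01, hi1lt, hd0, hd1, hdz⟩ :
        ∃ i0 i1, i0 < i1 ∧ i1 < m + 2 ∧ d i0 = 1 ∧ d i1 = 1 ∧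
          ∀ j, j < m + 2 → j ≠ i0 → j ≠ i1 → d j = 0 := by
      rcases Nat.lt_or_ge i2 i1' with h | h
      · exact ⟨i2, i1', h, hi1'lt, by omega, hi1'one,
          fun j hj h2 h1 => hdz0 j hj h2 h1⟩
      · exact ⟨i1', i2, by omega, hi2lt, hi1'one, by omega,
          fun j hj h1 h2 => hdz0 j hj h2 h1⟩
    have hi0lt : i0 < m + 2 := by omega
    have hBA0 : B i0 = A i0 := by
      have := (hcl i0).2
      simp only [hddef] at hd0
      omega
    have hBA1 : B i1 = A i1 := by
      have := (hcl i1).2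
      simp only [hddef] at hd1
      omega
    have hBother : ∀ j, j ≠ i0 → j ≠ i1 → B j = C j := by
      intro j hj0 hj1
      rw [hC]
      by_cases hjm : j < m + 2
      · have h0 := hdz j hjm hj0 hj1
        have := (hcl j).2
        simp only [hddef] at h0
        simp only [hjm, if_true]
        omega
      · simp only [hjm, if_false]
        exact hB0 j (by omega)
    -- key adjacency claim
    have key : i1 = i0 + 1 ∧ A i1 = A i0 := by
      rcases Nat.eq_zero_or_pos (A i0) with hp | hp
      · have hB00 : B i0 = 0 := by omega
        have hadj : i1 = i0 + 1 := by
          by_contra hne2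
          have h01 : i0 + 1 < i1 := by omega
          have hBs : B (i0+1) = C (i0+1) := hBother (i0+1) (by omega) (by omega)
          have hCs : C (i0+1) = A (i0+1) + 1 := by
            rw [hC]; simp only [show i0 + 1 < m + 2 by omega, if_true]
          have := hBanti (show i0 ≤ i0 + 1 by omega)
          omega
        have := hAanti (show i0 ≤ i1 by omega)
        exact ⟨hadj, by omega⟩
      · set p := A i0 with hpdef
        have hA1p : A i1 = p := by
          have hsub : ∀ x, A x = p ∧ B x = p → x = i0 ∨ x = i1 := by
            intro x ⟨hax, hbx⟩
            have hxlt : x < m + 2 := by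
              by_contra hxm
              have := hA0 x (by omega)
              omega
            by_contra hcon
            push_neg at hcon
            have := hdz x hxlt hcon.1 hcon.2
            simp only [hddef] at this
            omega
          by_contra hA1
          have hS1 : {i : ℕ | A i = p ∧ B i = p} = {i0} := by
            ext x
            simp only [Set.mem_setOf_eq, Set.mem_singleton_iff]
            constructor
            · intro hx
              rcases hsub x hx with h | h
              · exact h
              · exact absurd (h ▸ hx.1) hA1
            · rintro rfl
              exact ⟨rfl, hBA0⟩
          have hcard : Nat.card {i : ℕ // A i = p ∧ B i = p}
              = ({i : ℕ | A i = p ∧ B i = p}).ncard := Nat.card_coe_set_eq _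
          have hev := heven p hp
          rw [hcard, hS1, Set.ncard_singleton] at hev
          exact (Nat.not_even_iff.mpr rfl) hev
        have hadj : i1 = i0 + 1 := by
          by_contra hne2
          have h01 : i0 + 1 < i1 := by omega
          have hBs : B (i0+1) = C (i0+1) := hBother (i0+1) (by omega) (by omega)
          have hCs : C (i0+1) = A (i0+1) + 1 := by
            rw [hC]; simp only [show i0 + 1 < m + 2 by omega, if_true]
          have h1 := hBanti (show i0 ≤ i0 + 1 by omega)
          have h2 := hAanti (show i0 + 1 ≤ i1 by omega)
          omega
        exact ⟨hadj, hA1p⟩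
    obtain ⟨hadj, hAeq⟩ := key
    set c := A i0 + 1 with hcdef
    have hCi0 : C i0 = c := by
      rw [hC]; simp only [hi0lt, if_true]; exact hcdef.symm
    have hCi1 : C i1 = c := by
      rw [hC]; simp only [hi1lt, if_true]; omega
    have hnext : C (i1 + 1) ≤ c - 1 := by
      by_cases h : i1 + 1 < m + 2
      · have h1 : B (i1+1) = C (i1+1) := hBother (i1+1) (by omega) (by omega)
        have h2 : B (i1+1) ≤ B i1 := hBanti (by omega)
        omega
      · rw [hC]
        simp only [h, if_false]
        omega
    have hν1 : ν (c - 1) = i0 + 2 := by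
      apply le_antisymm
      · by_contra h
        push_neg at h
        have := (specν (i1+1) (c-1)).mp (by omega)
        omega
      · have : c - 1 < C i1 := by omega
        have := (specν i1 (c-1)).mpr this
        omega
    have hμ1' : μ (c - 1) = i0 := by
      apply le_antisymm
      · by_contra h
        push_neg at h
        have := (specμ i0 (c-1)).mp h
        omega
      · rcases Nat.eq_zero_or_pos i0 with h0 | h0
        · omega
        · have hle : C i0 ≤ C (i0 - 1) := hCanti (by omega)
          have hBC : B (i0-1) = C (i0-1) := hBother (i0-1) (by omega) (by omega)
          have : c - 1 < B (i0 - 1) := by omega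
          have := (specμ (i0-1) (c-1)).mpr this
          omega
    refine ⟨hν, hμ, Or.inl ⟨c - 1, by omega, ?_⟩⟩
    intro j hj
    apply nat_eq_of_lt_iff
    intro k
    rw [specμ k j, specν k j]
    by_cases hk0 : k = i0
    · subst hk0
      omega
    · by_cases hk1 : k = i1
      · subst hk1
        omega
      · rw [hBother k hk0 hk1]
end

section
/- Let λ be a partition with λ₁ = λ₂ (largest part repeated) and let λ' be a partition with λ₁' = λ₁. Set μ' = [λ₂ + 1, λ₃, λ₄, …, λ_k] and λ'* = [λ'₂, λ'₃, …]. If μ' and λ'* are 2-transverse, then λ'₂ = λ₁, and λ and λ' are 2-transverse. -/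
/-!
Closeness of the first parts of μ' = [λ₂ + 1, λ₃, …] and λ'* = [λ'₂, λ'₃, …] together with
λ'₂ ≤ λ'₁ = λ₁ = λ₂ forces λ'₂ = λ₁. Hence these first parts differ by one and are not a common
part, so the common parts of μ' and λ'* are exactly those of [λ₃, …] and [λ'₃, …]. Passing to λ
and λ' adds the two common parts λ₁ = λ'₁ and λ₂ = λ'₂, which does not change any parity.
-/

theorem pcons_head_tail (f : ℕ → ℕ) : pcons (f 0) (fun i => f (i + 1)) = f := by
  funext i
  cases i <;> rfl

theorem pcons_pcons_head_tail (f : ℕ → ℕ) :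
    pcons (f 0) (pcons (f 1) fun i => f (i + 2)) = f := by
  funext i
  rcases i with _ | _ | i <;> rfl

theorem close_pcons_iff {a b : ℕ} {F G : ℕ → ℕ} :
    Close (pcons a F) (pcons b G) ↔ (a ≤ b + 1 ∧ b ≤ a + 1) ∧ Close F G :=
  ⟨fun h => ⟨h 0, fun i => h (i + 1)⟩, fun ⟨h0, h⟩ i => by cases i with
    | zero => exact h0
    | succ i => exact h i⟩

theorem Nat.card_subtype_eq_count {P : ℕ → Prop} [DecidablePred P] {N : ℕ}
    (hN : ∀ i, P i → i < N) : Nat.card {i // P i} = Nat.count P N := by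
  rw [Nat.count_eq_card_filter_range, ← Nat.card_eq_finsetCard]
  exact Nat.card_congr (Equiv.subtypeEquivRight fun i => by
    simpa only [Finset.mem_filter, Finset.mem_range] using ⟨fun h => ⟨hN i h, h⟩, And.right⟩)

section CommonParts

variable {F G : ℕ → ℕ} {N : ℕ}

theorem pcons_eq_zero_of_le (a : ℕ) (hN : ∀ i, N ≤ i → F i = 0) :
    ∀ i, N + 1 ≤ i → pcons a F i = 0
  | 0, h => absurd h (Nat.not_succ_le_zero N)
  | i + 1, h => hN i (Nat.le_of_succ_le_succ h)

-- `hN` and `0 < p` keep both sets finite; `Nat.card` of an infinite type is `0`.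
theorem card_common_pcons {p : ℕ} (hN : ∀ i, N ≤ i → F i = 0) (hp : 0 < p) (a b : ℕ) :
    Nat.card {i // pcons a F i = p ∧ pcons b G i = p} =
      Nat.card {i // F i = p ∧ G i = p} + if a = p ∧ b = p then 1 else 0 := by
  have bound : ∀ {H : ℕ → ℕ} {M : ℕ}, (∀ i, M ≤ i → H i = 0) → ∀ i, H i = p → i < M :=
    fun hM i hi => Nat.lt_of_not_le fun h => hp.ne' (hi ▸ hM i h)
  rw [Nat.card_subtype_eq_count fun i hi => bound (pcons_eq_zero_of_le a hN) i hi.1,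
    Nat.card_subtype_eq_count fun i hi => bound hN i hi.1, Nat.count_succ']
  rfl

theorem Transverse2.of_pcons {a b : ℕ} (hN : ∀ i, N ≤ i → F i = 0) (hab : a ≠ b)
    (h : Transverse2 (pcons a F) (pcons b G)) : Transverse2 F G := by
  refine ⟨(close_pcons_iff.mp h.1).2, fun p hp => ?_⟩
  have hcard := card_common_pcons (G := G) hN hp a b
  rw [if_neg fun hap => hab (hap.1.trans hap.2.symm), add_zero] at hcard
  exact hcard ▸ h.2 p hp

theorem Transverse2.pcons_pcons (a : ℕ) (hN : ∀ i, N ≤ i → F i = 0) (h : Transverse2 F G) :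
    Transverse2 (pcons a (pcons a F)) (pcons a (pcons a G)) := by
  refine ⟨close_pcons_iff.mpr ⟨by omega, close_pcons_iff.mpr ⟨by omega, h.1⟩⟩, fun p hp => ?_⟩
  rw [card_common_pcons (pcons_eq_zero_of_le a hN) hp, card_common_pcons hN hp, add_assoc]
  exact (h.2 p hp).add (by split_ifs <;> decide)

end CommonParts

/-- If λ₁ = λ₂, λ₁' = λ₁, and μ' = [λ₂+1, λ₃, …] is 2-transverse with λ'*, then
λ'₂ = λ₁ and λ, λ' are 2-transverse. -/
theorem stmt11 (f g : ℕ → ℕ) (hf : IsPartition f) (hg : IsPartition g)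
    (h12 : f 0 = f 1) (hg1 : g 0 = f 0)
    (ht : Transverse2 (pcons (f 1 + 1) (fun i => f (i + 2))) (fun i => g (i + 1))) :
    g 1 = f 0 ∧ Transverse2 f g := by
  obtain ⟨-, N, hN⟩ := hf
  have hgf : g 1 = f 0 := by
    have h0 : f 1 + 1 ≤ g 1 + 1 := (ht.1 0).1
    have := hg.1 zero_le_one
    omega
  have hN2 : ∀ i, N ≤ i → f (i + 2) = 0 := fun i hi => hN (i + 2) (by omega)
  have ht' : Transverse2 (fun i => f (i + 2)) (fun i => g (i + 2)) := by
    rw [← pcons_head_tail fun i => g (i + 1)] at ht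
    exact ht.of_pcons (b := g 1) hN2 (by omega)
  refine ⟨hgf, ?_⟩
  rw [← pcons_pcons_head_tail f, ← pcons_pcons_head_tail g, ← h12, hg1, hgf]
  exact ht'.pcons_pcons _ hN2
end

section
/- Let λ be a partition of n and μ a partition of n + m with m ≥ λ₁, ᵗλ and ᵗμ close, and μ₁ ≤ m + 2. If there exists an index j ∈ [1, m+2] with ᵗμ_j = ᵗλ_j − 1, then ᵗμ_i = ᵗλ_i + 1 for all i ∈ [1, m+2] with i ≠ j (where ᵗλ is extended by zeros). -/
open Finset

/-- Counting the cells of the Young diagram by rows and by columns. -/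
lemma psize_eq_sum_conj {f : ℕ → ℕ} (hf : IsPartition f) {M : ℕ} (hM : f 0 ≤ M) :
    psize f = ∑ i ∈ range M, conj f i := by
  obtain ⟨hanti, N, hN⟩ := hf
  have hrows : psize f = ∑ j ∈ range N, f j := by
    apply finsum_eq_sum_of_support_subset
    intro j hj
    by_contra hNj
    exact hj (hN j (by simpa using hNj))
  have hrow (j : ℕ) : #{i ∈ range M | i + 1 ≤ f j} = f j := by
    have hfj : f j ≤ M := (hanti (Nat.zero_le j)).trans hM
    rw [show {i ∈ range M | i + 1 ≤ f j} = range (f j) by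
      ext i; simp only [mem_filter, mem_range]; omega, card_range]
  simp_rw [hrows, conj_eq_card_filter hN, card_filter]
  rw [sum_comm]
  simp_rw [← card_filter, hrow]

lemma eq_one_of_sum_eq_card_sub_two {ι : Type*} [DecidableEq ι] {s : Finset ι} {d : ι → ℤ}
    (hle : ∀ k ∈ s, d k ≤ 1) {j : ι} (hj : j ∈ s) (hdj : d j = -1)
    (hsum : ∑ k ∈ s, d k = #s - 2) : ∀ i ∈ s, i ≠ j → d i = 1 := by
  have hdefect : ∑ k ∈ s.erase j, (1 - d k) = 0 := by
    rw [← add_sum_erase s d hj] at hsum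
    rw [sum_sub_distrib, sum_const, card_erase_of_mem hj, nsmul_one,
      Nat.cast_sub (card_pos.mpr ⟨j, hj⟩)]
    push_cast
    linarith
  intro i hi hij
  have hdi := (sum_eq_zero_iff_of_nonneg fun k hk =>
    sub_nonneg.mpr (hle k (mem_of_mem_erase hk))).mp hdefect i (mem_erase.mpr ⟨hij, hi⟩)
  linarith

/-- If m ≥ λ₁, |μ| = n + m, μ₁ ≤ m + 2, ᵗλ and ᵗμ are close, and ᵗμ_j = ᵗλ_j − 1
for some j in the first m + 2 columns, then ᵗμ_i = ᵗλ_i + 1 for all other i in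
the first m + 2 columns. (0-indexed columns.) -/
theorem stmt16 (f μ : ℕ → ℕ) (m j : ℕ) (hf : IsPartition f) (hμ : IsPartition μ)
    (hm : f 0 ≤ m) (hsize : psize μ = psize f + m) (hμ1 : μ 0 ≤ m + 2)
    (hc : Close (conj f) (conj μ)) (hj : j < m + 2) (hje : conj μ j + 1 = conj f j) :
    ∀ i, i < m + 2 → i ≠ j → conj μ i = conj f i + 1 := by
  set d : ℕ → ℤ := fun i => (conj μ i : ℤ) - conj f i with hd
  have hsum : ∑ k ∈ range (m + 2), d k = #(range (m + 2)) - 2 := by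
    rw [psize_eq_sum_conj hμ hμ1, psize_eq_sum_conj hf (M := m + 2) (by omega)] at hsize
    have hsize' := congrArg (Nat.cast : ℕ → ℤ) hsize
    push_cast at hsize'
    simp only [hd, sum_sub_distrib, card_range]
    push_cast
    linarith
  have hle (k : ℕ) (_ : k ∈ range (m + 2)) : d k ≤ 1 := by
    have hck := (hc k).2
    simp only [hd]
    omega
  intro i hi hij
  have hdi := eq_one_of_sum_eq_card_sub_two hle (mem_range.mpr hj) (by simp only [hd]; omega) hsum
    i (mem_range.mpr hi) hij
  simp only [hd] at hdi
  omega
end
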